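/- arXiv:2011.07666 — 8 statements merged into one kernel-verified Lean document; each statement's English description precedes it below -/
import Mathlib

section
/- If B(n,m) satisfies B(n,m) = θ^m·B(n-1,m) + B(n,m-1) and B(n,m) = B(n-1,m) + θ^n·B(n,m-1) with B(0,x) = B(x,0) = 1, then (1 - θ^m)·B(n,m) = (1 - θ^{n+m})·B(n,m-1) for all n, m ≥ 1. -/
/-- If `B : ℕ → ℕ → ℝ` satisfies both recurrences
`B(n,m) = θ^m·B(n-1,m) + B(n,m-1)` and `B(n,m) = B(n-1,m) + θ^n·B(n,m-1)` for `n,m ≥ 1`,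
with `B(0,x) = B(x,0) = 1`, then `(1-θ^m)·B(n,m) = (1-θ^{n+m})·B(n,m-1)` for all `n,m ≥ 1`. -/
theorem Bcross_quotient_relation (θ : ℝ) (B : ℕ → ℕ → ℝ)
    (h1 : ∀ n m : ℕ, 1 ≤ n → 1 ≤ m → B n m = θ ^ m * B (n - 1) m + B n (m - 1))
    (h2 : ∀ n m : ℕ, 1 ≤ n → 1 ≤ m → B n m = B (n - 1) m + θ ^ n * B n (m - 1))
    (h0 : ∀ x : ℕ, B 0 x = 1) (h0' : ∀ x : ℕ, B x 0 = 1)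
    (n m : ℕ) (hn : 1 ≤ n) (hm : 1 ≤ m) :
    (1 - θ ^ m) * B n m = (1 - θ ^ (n + m)) * B n (m - 1) := by
  have e1 := h1 n m hn hm
  have e2 := h2 n m hn hm
  have key : (1 - θ ^ m) * B (n - 1) m = (1 - θ ^ n) * B n (m - 1) := by
    linear_combination e1 - e2
  rw [e1, pow_add]
  linear_combination θ ^ m * key
end

section
/- Define T₂(N,k) = ∑ θ^{inv(π)} over all π ∈ S_N that are non-k-pickable for the left-to-right second-maximum strategy (i.e., no position in [k+1,N] is a left-to-right second maximum of π). Then T₂(k,k) = (P_k)! and for N ≥ k+1, k ≥ 1: T₂(N,k) = (P_k)! · ∏_{j=k-1}^{N-2} (1 + θ²·P_j), where P_j = 1 + θ + ... + θ^{j-1}. -/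
open Finset
open scoped Classical

/-- Number of inversions of a permutation of `Fin N`. -/
def invCount {N : ℕ} (π : Equiv.Perm (Fin N)) : ℕ :=
  (Finset.univ.filter (fun p : Fin N × Fin N => p.1 < p.2 ∧ π p.2 < π p.1)).card

/-- `P_j(θ) = 1 + θ + ⋯ + θ^{j-1}`. -/
def Ppoly (θ : ℝ) (j : ℕ) : ℝ := ∑ i ∈ Finset.range j, θ ^ i

/-- `(P_m)! = P_m ⋯ P_1`. -/
def Pfact (θ : ℝ) (m : ℕ) : ℝ := ∏ j ∈ Finset.Icc 1 m, Ppoly θ j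

/-- Position `i` of `π` is a left-to-right second maximum: `π i` is the second-largest
value among `π 0, …, π i`, i.e. exactly one position `l ≤ i` has `π l > π i`. -/
def isSecondMax {N : ℕ} (π : Equiv.Perm (Fin N)) (i : Fin N) : Prop :=
  (Finset.univ.filter (fun l : Fin N => l ≤ i ∧ π i < π l)).card = 1

/-- `π` is non-`k`-pickable for the second-maximum strategy: no position with
(0-based) index `≥ k` is a left-to-right second maximum. -/
def nonPickable2 {N : ℕ} (k : ℕ) (π : Equiv.Perm (Fin N)) : Prop :=
  ∀ i : Fin N, k ≤ (i : ℕ) → ¬ isSecondMax π i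

/-- `T₂(N,k) = ∑ θ^{inv π}` over non-`k`-pickable `π ∈ S_N` (second-maximum strategy). -/
noncomputable def T2 (θ : ℝ) (N k : ℕ) : ℝ :=
  ∑ π ∈ Finset.univ.filter (fun π : Equiv.Perm (Fin N) => nonPickable2 k π), θ ^ invCount π

section Ins

variable {n : ℕ}

/-- Insert value `v` at the last position, relabelling `σ` order-isomorphically. -/
noncomputable def insLast (v : Fin (n + 1)) (σ : Equiv.Perm (Fin n)) :
    Equiv.Perm (Fin (n + 1)) :=
  (finSuccEquivLast.trans (Equiv.optionCongr σ)).trans (finSuccEquiv' v).symm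

@[simp] lemma insLast_last (v : Fin (n + 1)) (σ : Equiv.Perm (Fin n)) :
    insLast v σ (Fin.last n) = v := by
  simp [insLast]

@[simp] lemma insLast_castSucc (v : Fin (n + 1)) (σ : Equiv.Perm (Fin n)) (i : Fin n) :
    insLast v σ (Fin.castSucc i) = v.succAbove (σ i) := by
  simp [insLast]

lemma insLast_bijective :
    Function.Bijective (fun p : Fin (n + 1) × Equiv.Perm (Fin n) => insLast p.1 p.2) := by
  rw [Fintype.bijective_iff_injective_and_card]
  constructor
  · rintro ⟨v, σ⟩ ⟨w, τ⟩ h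
    simp only at h
    have hv : v = w := by
      have := congrArg (fun π : Equiv.Perm (Fin (n + 1)) => π (Fin.last n)) h
      simpa using this
    subst hv
    have hσ : σ = τ := by
      apply Equiv.ext
      intro i
      have := congrArg (fun π : Equiv.Perm (Fin (n + 1)) => π (Fin.castSucc i)) h
      simp only [insLast_castSucc] at this
      exact Fin.succAbove_right_injective this
    rw [hσ]
  · simp [Fintype.card_perm, Nat.factorial_succ]

lemma card_filter_le_val (n m : ℕ) :
    (Finset.univ.filter (fun j : Fin n => m ≤ (j : ℕ))).card = n - m := by
  have h1 : (Finset.univ.filter (fun j : Fin n => m ≤ (j : ℕ))).card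
      = ((Finset.range n).filter (fun j => m ≤ j)).card := by
    rw [Finset.card_filter, Finset.card_filter,
      ← Fin.sum_univ_eq_sum_range (fun j => if m ≤ j then (1:ℕ) else 0) n]
  have h2 : (Finset.range n).filter (fun j => m ≤ j) = Finset.Ico m n := by
    ext j; simp [Finset.mem_Ico, and_comm]
  rw [h1, h2, Nat.card_Ico]

lemma sum_indicator_ge (v : Fin (n + 1)) (σ : Equiv.Perm (Fin n)) :
    (∑ i : Fin n, if (v : ℕ) ≤ ((σ i : Fin n) : ℕ) then (1:ℕ) else 0) = n - (v : ℕ) := by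
  rw [Equiv.sum_comp σ (fun j : Fin n => if (v : ℕ) ≤ (j : ℕ) then (1:ℕ) else 0)]
  rw [← Finset.card_filter]
  exact card_filter_le_val n v

lemma lt_insLast_iff (v : Fin (n + 1)) (j : Fin n) :
    v < v.succAbove j ↔ (v : ℕ) ≤ (j : ℕ) := by
  rw [Fin.lt_succAbove_iff_le_castSucc]
  rfl

lemma invCount_insLast (v : Fin (n + 1)) (σ : Equiv.Perm (Fin n)) :
    invCount (insLast v σ) = invCount σ + (n - (v : ℕ)) := by
  rw [invCount, invCount, Finset.card_filter, Finset.card_filter]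
  rw [Fintype.sum_prod_type]
  rw [Fin.sum_univ_castSucc
    (f := fun p1 : Fin (n+1) => ∑ p2 : Fin (n+1),
      if p1 < p2 ∧ insLast v σ p2 < insLast v σ p1 then (1:ℕ) else 0)]
  have hlast : (∑ p2 : Fin (n+1),
      if Fin.last n < p2 ∧ insLast v σ p2 < insLast v σ (Fin.last n) then (1:ℕ) else 0) = 0 := by
    apply Finset.sum_eq_zero
    intro p2 _
    have : ¬ Fin.last n < p2 := not_lt.2 (Fin.le_last p2)
    simp [this]
  rw [hlast, add_zero]
  have hrow : ∀ i : Fin n, (∑ p2 : Fin (n+1),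
      if Fin.castSucc i < p2 ∧ insLast v σ p2 < insLast v σ (Fin.castSucc i) then (1:ℕ) else 0)
      = (∑ j : Fin n, if i < j ∧ σ j < σ i then (1:ℕ) else 0)
        + (if (v : ℕ) ≤ ((σ i : Fin n) : ℕ) then (1:ℕ) else 0) := by
    intro i
    rw [Fin.sum_univ_castSucc
      (f := fun p2 : Fin (n+1) =>
        if Fin.castSucc i < p2 ∧ insLast v σ p2 < insLast v σ (Fin.castSucc i) then (1:ℕ) else 0)]
    congr 1
    · apply Finset.sum_congr rfl
      intro j _
      congr 1
      simp only [insLast_castSucc, eq_iff_iff]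
      rw [Fin.castSucc_lt_castSucc_iff, Fin.succAbove_lt_succAbove_iff]
    · congr 1
      simp only [insLast_castSucc, insLast_last, eq_iff_iff]
      have h1 : Fin.castSucc i < Fin.last n := Fin.castSucc_lt_last i
      rw [lt_insLast_iff]
      simp [h1]
  rw [Finset.sum_congr rfl (fun i _ => hrow i), Finset.sum_add_distrib]
  rw [sum_indicator_ge]
  congr 1
  rw [Fintype.sum_prod_type]

lemma isSecondMax_insLast_castSucc (v : Fin (n + 1)) (σ : Equiv.Perm (Fin n)) (i : Fin n) :
    isSecondMax (insLast v σ) (Fin.castSucc i) ↔ isSecondMax σ i := by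
  unfold isSecondMax
  have key : (Finset.univ.filter (fun l : Fin (n+1) =>
      l ≤ Fin.castSucc i ∧ insLast v σ (Fin.castSucc i) < insLast v σ l)).card
      = (Finset.univ.filter (fun l : Fin n => l ≤ i ∧ σ i < σ l)).card := by
    rw [Finset.card_filter, Finset.card_filter]
    rw [Fin.sum_univ_castSucc
      (f := fun l : Fin (n+1) =>
        if l ≤ Fin.castSucc i ∧ insLast v σ (Fin.castSucc i) < insLast v σ l then (1:ℕ) else 0)]
    have hl : ¬ (Fin.last n ≤ Fin.castSucc i) := not_le.2 (Fin.castSucc_lt_last i)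
    simp only [hl, false_and, if_false, add_zero]
    apply Finset.sum_congr rfl
    intro m _
    congr 1
    simp only [insLast_castSucc, eq_iff_iff]
    rw [Fin.castSucc_le_castSucc_iff, Fin.succAbove_lt_succAbove_iff]
  rw [key]

lemma isSecondMax_insLast_last (v : Fin (n + 1)) (σ : Equiv.Perm (Fin n)) :
    isSecondMax (insLast v σ) (Fin.last n) ↔ n - (v : ℕ) = 1 := by
  unfold isSecondMax
  have key : (Finset.univ.filter (fun l : Fin (n+1) =>
      l ≤ Fin.last n ∧ insLast v σ (Fin.last n) < insLast v σ l)).card = n - (v : ℕ) := by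
    rw [Finset.card_filter]
    rw [Fin.sum_univ_castSucc
      (f := fun l : Fin (n+1) =>
        if l ≤ Fin.last n ∧ insLast v σ (Fin.last n) < insLast v σ l then (1:ℕ) else 0)]
    simp only [insLast_last, insLast_castSucc, Fin.le_last, true_and, lt_self_iff_false,
      if_false, add_zero]
    rw [← sum_indicator_ge v σ]
    apply Finset.sum_congr rfl
    intro m _
    congr 1
    simp only [eq_iff_iff]
    exact lt_insLast_iff v (σ m)
  rw [key]

lemma nonPickable2_insLast {k : ℕ} (hkn : k ≤ n) (v : Fin (n + 1)) (σ : Equiv.Perm (Fin n)) :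
    nonPickable2 k (insLast v σ) ↔ nonPickable2 k σ ∧ n - (v : ℕ) ≠ 1 := by
  constructor
  · intro h
    refine ⟨fun i hi => ?_, ?_⟩
    · have := h (Fin.castSucc i) (by simpa using hi)
      rwa [isSecondMax_insLast_castSucc] at this
    · have := h (Fin.last n) (by simpa using hkn)
      rwa [isSecondMax_insLast_last] at this
  · rintro ⟨h1, h2⟩ i hi
    rcases Fin.eq_castSucc_or_eq_last i with ⟨j, rfl⟩ | rfl
    · rw [isSecondMax_insLast_castSucc]
      exact h1 j (by simpa using hi)
    · rw [isSecondMax_insLast_last]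
      exact h2

lemma sum_fin_sub (f : ℕ → ℝ) (n : ℕ) :
    (∑ v : Fin (n + 1), f (n - (v : ℕ))) = ∑ i ∈ Finset.range (n + 1), f i := by
  rw [Fin.sum_univ_eq_sum_range (fun v => f (n - v)) (n + 1)]
  rw [← Finset.sum_range_reflect f (n + 1)]
  apply Finset.sum_congr rfl
  intro i _
  have h : n + 1 - 1 - i = n - i := by omega
  rw [h]

lemma Ppoly_add_two (θ : ℝ) (m : ℕ) :
    Ppoly θ (m + 2) = 1 + θ + θ ^ 2 * Ppoly θ m := by
  rw [Ppoly, Finset.sum_range_succ', Finset.sum_range_succ']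
  have h : ∀ x, θ ^ (x + 1 + 1) = θ ^ 2 * θ ^ x := by intro x; ring
  rw [Finset.sum_congr rfl (fun x _ => h x), ← Finset.mul_sum, ← Ppoly]
  simp [pow_succ]
  ring

/-- Sum over allowed last values. -/
lemma sum_allowed (θ : ℝ) (n : ℕ) (hn : 1 ≤ n) :
    (∑ v : Fin (n + 1), if n - (v : ℕ) ≠ 1 then θ ^ (n - (v : ℕ)) else 0)
      = Ppoly θ (n + 1) - θ := by
  rw [sum_fin_sub (fun i => if i ≠ 1 then θ ^ i else 0) n]
  have : ∀ i, (if i ≠ 1 then θ ^ i else 0) = θ ^ i - (if i = 1 then θ ^ i else 0) := by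
    intro i; by_cases h : i = 1 <;> simp [h]
  rw [Finset.sum_congr rfl (fun i _ => this i), Finset.sum_sub_distrib, ← Ppoly]
  congr 1
  rw [Finset.sum_ite_eq' (Finset.range (n + 1)) 1 (fun i => θ ^ i)]
  simp [Finset.mem_range, Nat.lt_succ_of_le hn]

lemma sum_all (θ : ℝ) (n : ℕ) :
    (∑ v : Fin (n + 1), θ ^ (n - (v : ℕ))) = Ppoly θ (n + 1) := by
  rw [sum_fin_sub (fun i => θ ^ i) n, Ppoly]

/-- T2 as a sum over the whole group with indicator. -/
lemma Pfact_succ (θ : ℝ) (m : ℕ) : Pfact θ (m + 1) = Pfact θ m * Ppoly θ (m + 1) := by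
  rw [Pfact, Pfact, Finset.prod_Icc_succ_top (Nat.le_add_left 1 m)]

lemma T2_eq_sum (θ : ℝ) (N k : ℕ) :
    T2 θ N k = ∑ π : Equiv.Perm (Fin N),
      if nonPickable2 k π then θ ^ invCount π else 0 := by
  rw [T2, Finset.sum_filter]

lemma T2_self (θ : ℝ) (m : ℕ) : T2 θ m m = Pfact θ m := by
  have hfull : ∀ m, T2 θ m m = ∑ π : Equiv.Perm (Fin m), θ ^ invCount π := by
    intro m
    rw [T2_eq_sum]
    apply Finset.sum_congr rfl
    intro π _
    have : nonPickable2 m π := by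
      intro i hi
      exact absurd (lt_of_le_of_lt hi i.isLt) (lt_irrefl m)
    simp [this]
  induction m with
  | zero =>
    rw [hfull]
    simp [Pfact, invCount]
  | succ m ih =>
    rw [hfull]
    rw [← (insLast_bijective (n := m)).sum_comp
      (fun π : Equiv.Perm (Fin (m + 1)) => θ ^ invCount π)]
    simp only [Fintype.sum_prod_type, invCount_insLast, pow_add]
    have hsum : (∑ v : Fin (m+1), ∑ σ : Equiv.Perm (Fin m), θ ^ invCount σ * θ ^ (m - (v:ℕ)))
        = (∑ v : Fin (m+1), θ ^ (m - (v:ℕ))) * (∑ σ : Equiv.Perm (Fin m), θ ^ invCount σ) := by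
      rw [Finset.sum_mul_sum]
      exact Finset.sum_congr rfl fun v _ => Finset.sum_congr rfl fun σ _ => by ring
    rw [hsum, sum_all, ← hfull, ih, Pfact_succ]
    ring

lemma T2_rec (θ : ℝ) {k n : ℕ} (hn : 1 ≤ n) (hkn : k ≤ n) :
    T2 θ (n + 1) k = (Ppoly θ (n + 1) - θ) * T2 θ n k := by
  rw [T2_eq_sum]
  rw [← (insLast_bijective (n := n)).sum_comp
    (fun π : Equiv.Perm (Fin (n + 1)) => if nonPickable2 k π then θ ^ invCount π else 0)]
  simp only [Fintype.sum_prod_type, nonPickable2_insLast hkn, invCount_insLast, pow_add]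
  have hterm : ∀ (v : Fin (n + 1)) (σ : Equiv.Perm (Fin n)),
      (if nonPickable2 k σ ∧ n - (v : ℕ) ≠ 1 then θ ^ invCount σ * θ ^ (n - (v : ℕ)) else 0)
      = (if n - (v : ℕ) ≠ 1 then θ ^ (n - (v : ℕ)) else 0)
        * (if nonPickable2 k σ then θ ^ invCount σ else 0) := by
    intro v σ
    by_cases h1 : nonPickable2 k σ <;> by_cases h2 : n - (v : ℕ) ≠ 1 <;>
      simp [h1, h2, mul_comm]
  rw [Finset.sum_congr rfl fun v _ => Finset.sum_congr rfl fun σ _ => hterm v σ]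
  rw [← Finset.sum_mul_sum, sum_allowed θ n hn, ← T2_eq_sum]

lemma step_factor (θ : ℝ) {n : ℕ} (hn : 1 ≤ n) :
    Ppoly θ (n + 1) - θ = 1 + θ ^ 2 * Ppoly θ (n - 1) := by
  obtain ⟨m, rfl⟩ := Nat.exists_eq_add_of_le hn
  rw [show 1 + m + 1 = m + 2 from by ring, Ppoly_add_two, show 1 + m - 1 = m from by omega]
  ring

lemma T2_main (θ : ℝ) {k : ℕ} (hk : 1 ≤ k) :
    ∀ d, T2 θ (k + 1 + d) k = Pfact θ k
      * ∏ j ∈ Finset.Icc (k - 1) (k - 1 + d), (1 + θ ^ 2 * Ppoly θ j) := by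
  intro d
  induction d with
  | zero =>
    simp only [Nat.add_zero]
    rw [Finset.Icc_self, Finset.prod_singleton]
    rw [show k + 1 = k + 1 from rfl, T2_rec θ hk (le_refl k), T2_self,
      step_factor θ hk]
    ring
  | succ d ih =>
    have h1 : k + 1 + (d + 1) = (k + 1 + d) + 1 := by ring
    rw [h1, T2_rec θ (by omega) (by omega), ih, step_factor θ (by omega)]
    have h2 : k + 1 + d - 1 = k + d := by omega
    have h3 : k - 1 + (d + 1) = (k - 1 + d) + 1 := by ring
    rw [h2, h3, Finset.prod_Icc_succ_top (by omega)]
    have h4 : k - 1 + d + 1 = k + d := by omega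
    rw [h4]
    ring

end Ins

/-- `T₂(k,k) = (P_k)!` and, for `k ≥ 1` and `N ≥ k+1`,
`T₂(N,k) = (P_k)! · ∏_{j=k-1}^{N-2} (1 + θ²·P_j)`. -/
theorem T2_closed_form (θ : ℝ) (N k : ℕ) (hk : 1 ≤ k) (hN : k + 1 ≤ N) :
    T2 θ k k = Pfact θ k ∧
    T2 θ N k = Pfact θ k * ∏ j ∈ Finset.Icc (k - 1) (N - 2), (1 + θ ^ 2 * Ppoly θ j) := by
  refine ⟨T2_self θ k, ?_⟩
  obtain ⟨d, rfl⟩ : ∃ d, N = k + 1 + d := ⟨N - (k + 1), by omega⟩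
  have h : k + 1 + d - 2 = k - 1 + d := by omega
  rw [h]
  exact T2_main θ hk d
end

section
/- For k ≥ 1, the generating function over k-winnable permutations (for the second-maximum strategy) satisfies the closed form W₂(N,k) = θ·T₂(N,k) − θ^{2N−2k+1}·(P_{N−2})!·P_k·P_{k−1} = θ·(P_k)!·[ ∏_{j=k−1}^{N−2} (1+θ²P_j) − θ^{2N−2k}·∏_{j=k−1}^{N−2} P_j ]. -/
open Finset
open scoped Classical

/-- `π ∈ S_N` is `k`-winnable for the second-maximum strategy. -/
def kWinnable2 {N : ℕ} (k : ℕ) (π : Equiv.Perm (Fin N)) : Prop :=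
  ∃ i : Fin N, k ≤ (i : ℕ) ∧ isSecondMax π i ∧
    (∀ j : Fin N, k ≤ (j : ℕ) → isSecondMax π j → i ≤ j) ∧ ((π i : Fin N) : ℕ) = N - 2

/-- `W₂(N,k) = ∑ θ^{inv π}` over `k`-winnable `π ∈ S_N`. -/
noncomputable def W2 (θ : ℝ) (N k : ℕ) : ℝ :=
  ∑ π ∈ Finset.univ.filter (fun π : Equiv.Perm (Fin N) => kWinnable2 k π), θ ^ invCount π

/-!
Through the Lehmer code `c_i(π) = #{l ≤ i | π i < π l}`, permutations of `Fin N` correspond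
to sequences with `c_i ≤ i`, with `inv π = ∑ c_i`; position `i` is a left-to-right second
maximum iff `c_i = 1`. So every set of permutations cut out by separate conditions on the `c_i`
has a product generating function. A permutation is `k`-winnable iff for some `q ≥ k` we have
`c_i ≠ 1` for `k ≤ i < q`, `c_q = 1` and `c_i ≥ 2` for `i > q`: the values `N - 1` and `N - 2`
have codes `0` and `≤ 1`, so they sit at or before `q`, and `c_q = 1` forces `π q = N - 2`.
Summing the resulting products over `q` telescopes, because the factor `1 + θ²P_{i-1}` of the
condition `c_i ≠ 1` is `1` plus the factor `θ²P_{i-1}` of the condition `c_i ≥ 2`.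
-/

variable {N : ℕ}

def lehmerCode (π : Equiv.Perm (Fin N)) (i : Fin N) : ℕ :=
  #{l | l ≤ i ∧ π i < π l}

lemma lehmerCode_le (π : Equiv.Perm (Fin N)) (i : Fin N) : lehmerCode π i ≤ i := by
  calc lehmerCode π i ≤ #(Iio i) :=
        card_le_card fun l hl => by
          simp only [mem_filter, mem_univ, true_and] at hl
          exact mem_Iio.2 (hl.1.lt_of_ne (by rintro rfl; exact hl.2.false))
    _ = i := Fin.card_Iio i

lemma lehmerCode_le_sub (π : Equiv.Perm (Fin N)) (i : Fin N) :
    lehmerCode π i ≤ N - 1 - π i := by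
  calc lehmerCode π i ≤ #(Ioi (π i)) :=
        card_le_card_of_injOn π (fun l hl => by simp_all) π.injective.injOn
    _ = N - 1 - π i := Fin.card_Ioi _

lemma invCount_eq_sum_lehmerCode (π : Equiv.Perm (Fin N)) :
    invCount π = ∑ i, lehmerCode π i := by
  rw [invCount, card_eq_sum_card_fiberwise (f := Prod.snd) (t := univ) fun _ _ => mem_univ _]
  refine sum_congr rfl fun i _ => card_nbij' Prod.fst (fun l => (l, i)) ?_ ?_ ?_ ?_
  · rintro ⟨l, j⟩ h
    simp only [mem_coe, mem_filter, mem_univ, true_and] at h ⊢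
    obtain ⟨⟨hlt, hπ⟩, rfl⟩ := h
    exact ⟨hlt.le, hπ⟩
  · intro l h
    simp only [mem_coe, mem_filter, mem_univ, true_and] at h ⊢
    exact ⟨⟨h.1.lt_of_ne (by rintro rfl; exact h.2.false), h.2⟩, trivial⟩
  · rintro ⟨l, j⟩ h
    simp only [mem_coe, mem_filter, mem_univ, true_and] at h
    simp [h.2]
  · intro l _
    rfl

lemma strictAntiOn_card_filter_lt {α : Type*} [LinearOrder α] (S : Finset α) :
    StrictAntiOn (fun x => #{v ∈ S | x < v}) S := by
  intro x _ y hy hxy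
  refine card_lt_card ⟨monotone_filter_right _ fun v _ hv => hxy.trans hv, fun h => ?_⟩
  exact (h (mem_filter.2 ⟨hy, hxy⟩) |> mem_filter.1).2.false

lemma lehmerCode_eq_card_filter_image (π : Equiv.Perm (Fin N)) (i : Fin N) :
    lehmerCode π i = #{v ∈ (Iic i).image π | π i < v} := by
  rw [filter_image, card_image_of_injective _ π.injective, lehmerCode]
  congr 1
  ext l
  simp

lemma image_Iic_eq_of_eqOn_Ioi {π σ : Equiv.Perm (Fin N)} {i : Fin N}
    (h : ∀ j, i < j → π j = σ j) : (Iic i).image π = (Iic i).image σ := by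
  have key : ∀ {π σ : Equiv.Perm (Fin N)}, (∀ j, i < j → π j = σ j) →
      ∀ v, σ.symm v ≤ i → π.symm v ≤ i := fun {π σ} h v hv => by
    by_contra hlt
    rw [not_le] at hlt
    have : σ (π.symm v) = v := by rw [← h _ hlt, π.apply_symm_apply]
    exact hlt.not_ge (σ.symm_apply_eq.2 this.symm ▸ hv)
  ext v
  simp only [mem_image, mem_Iic]
  constructor
  · rintro ⟨l, hl, rfl⟩
    exact ⟨σ.symm (π l), key (fun j hj => (h j hj).symm) _ (by simpa using hl), by simp⟩
  · rintro ⟨l, hl, rfl⟩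
    exact ⟨π.symm (σ l), key h _ (by simpa using hl), by simp⟩

def lehmerCodeFin (π : Equiv.Perm (Fin N)) : ∀ i : Fin N, Fin (i + 1) :=
  fun i => ⟨lehmerCode π i, Nat.lt_succ_of_le (lehmerCode_le π i)⟩

lemma lehmerCodeFin_injective : Function.Injective (lehmerCodeFin (N := N)) := by
  intro π σ h
  have hcode (i : Fin N) : lehmerCode π i = lehmerCode σ i := congrArg Fin.val (congrFun h i)
  ext1 i
  -- If `π` and `σ` agree after `i`, they place the same set of values at positions `≤ i`, and
  -- `π i`, `σ i` are the elements of that set exceeded by equally many of its elements.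
  induction i using WellFoundedGT.induction with
  | _ i ih =>
    have himage := image_Iic_eq_of_eqOn_Ioi ih
    refine (strictAntiOn_card_filter_lt ((Iic i).image π)).injOn
      (mem_image_of_mem π (mem_Iic.2 le_rfl))
      (himage ▸ mem_image_of_mem σ (mem_Iic.2 le_rfl)) ?_
    rw [← lehmerCode_eq_card_filter_image, hcode, lehmerCode_eq_card_filter_image, himage]

lemma lehmerCodeFin_bijective : Function.Bijective (lehmerCodeFin (N := N)) := by
  rw [Fintype.bijective_iff_injective_and_card, Fintype.card_perm, Fintype.card_pi]
  refine ⟨lehmerCodeFin_injective, ?_⟩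
  simp only [Fintype.card_fin]
  rw [Fin.prod_univ_eq_prod_range (· + 1), prod_range_add_one_eq_factorial]

lemma sum_filter_pow_invCount {R : Type*} [CommSemiring R] (θ : R) (p : Fin N → ℕ → Prop)
    [∀ i, DecidablePred (p i)] :
    ∑ π with ∀ i, p i (lehmerCode π i), θ ^ invCount π =
      ∏ i : Fin N, ∑ v ∈ range (i + 1) with p i v, θ ^ v := by
  let e := Equiv.ofBijective _ (lehmerCodeFin_bijective (N := N))
  calc ∑ π with ∀ i, p i (lehmerCode π i), θ ^ invCount π
      = ∑ f ∈ Fintype.piFinset fun i : Fin N => {v : Fin (i + 1) | p i v},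
          ∏ i, θ ^ (f i : ℕ) := by
        refine sum_equiv e (fun π => ?_) fun π _ => ?_
        · simp [Fintype.mem_piFinset, e, lehmerCodeFin]
        · simp [invCount_eq_sum_lehmerCode, prod_pow_eq_pow_sum, e, lehmerCodeFin]
    _ = ∏ i : Fin N, ∑ v ∈ range (i + 1) with p i v, θ ^ v := by
        refine (prod_univ_sum (fun i : Fin N => {v : Fin (i + 1) | p i v})
          fun i v => θ ^ (v : ℕ)).symm.trans ?_
        refine prod_congr rfl fun i _ => ?_
        rw [sum_filter, sum_filter,
          ← Fin.sum_univ_eq_sum_range (fun v => if p i v then θ ^ v else 0)]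

lemma isSecondMax_iff (π : Equiv.Perm (Fin N)) (i : Fin N) :
    isSecondMax π i ↔ lehmerCode π i = 1 := Iff.rfl

lemma exists_lt_of_lehmerCode_pos {π : Equiv.Perm (Fin N)} {i : Fin N} (h : 0 < lehmerCode π i) :
    ∃ l ≤ i, π i < π l := by
  obtain ⟨l, hl⟩ := card_pos.1 h
  simp only [mem_filter, mem_univ, true_and] at hl
  exact ⟨l, hl⟩

lemma two_le_lehmerCode {π : Equiv.Perm (Fin N)} {a b l : Fin N} (hab : a ≠ b)
    (ha : a ≤ l) (hb : b ≤ l) (hπa : π l < π a) (hπb : π l < π b) :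
    2 ≤ lehmerCode π l :=
  one_lt_card.2 ⟨a, by simp [ha, hπa], b, by simp [hb, hπb], hab⟩

/-- The condition on the Lehmer code value `v` at position `n` when the candidate accepted is
the one at position `q`. -/
def winZone (k q n v : ℕ) : Prop :=
  (k ≤ n → n < q → v ≠ 1) ∧ (n = q → v = 1) ∧ (q < n → 2 ≤ v)

lemma kWinnable2_iff {k : ℕ} (hN : 2 ≤ N) (π : Equiv.Perm (Fin N)) :
    kWinnable2 k π ↔
      ∃ q, k ≤ q ∧ q < N ∧ ∀ i : Fin N, winZone k q i (lehmerCode π i) := by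
  have hval (l : Fin N) : (π l : ℕ) < N := (π l).isLt
  have hne {l l' : Fin N} (h : l ≠ l') : (π l : ℕ) ≠ π l' :=
    Fin.val_ne_of_ne (π.injective.ne h)
  constructor
  · rintro ⟨q, hkq, hq1, hfirst, hπq⟩
    rw [isSecondMax_iff] at hq1
    obtain ⟨p, hpq, hπp⟩ := exists_lt_of_lehmerCode_pos (π := π) (i := q) (by omega)
    have hpq' : p ≠ q := by rintro rfl; exact hπp.false
    refine ⟨q, hkq, q.isLt, fun i => ⟨fun hki hiq h => ?_, fun h => ?_, fun hqi => ?_⟩⟩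
    · exact (hfirst i hki h).not_gt hiq
    · rw [Fin.ext h]; exact hq1
    · have hπi : (π i : ℕ) < N - 2 := by
        have := hne (ne_of_gt (hpq.trans_lt hqi)); have := hne (ne_of_gt hqi)
        have : (π q : ℕ) < π p := hπp
        have := hval i; have := hval p; omega
      refine two_le_lehmerCode hpq' (hpq.trans hqi.le) hqi.le ?_ ?_ <;>
        · rw [Fin.lt_def]; omega
  · rintro ⟨q, hkq, hqN, hzone⟩
    set q' : Fin N := ⟨q, hqN⟩
    have hq1 : lehmerCode π q' = 1 := (hzone q').2.1 rfl
    have hle_of_code_le_one (l : Fin N) (hl : lehmerCode π l ≤ 1) : l ≤ q' :=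
      not_lt.1 fun h => by have := (hzone l).2.2 h; omega
    let la := π.symm ⟨N - 1, by omega⟩
    let lb := π.symm ⟨N - 2, by omega⟩
    have hπla : (π la : ℕ) = N - 1 := by simp [la]
    have hπlb : (π lb : ℕ) = N - 2 := by simp [lb]
    have hπq : (π q' : ℕ) = N - 2 := by
      have := lehmerCode_le_sub π q'
      by_contra h
      have hlt (l : Fin N) (hl : N - 2 ≤ π l) : π q' < π l := by rw [Fin.lt_def]; omega
      have := two_le_lehmerCode (fun h => by simp [la, lb, Fin.ext_iff] at h; omega)
        (hle_of_code_le_one la (by have := lehmerCode_le_sub π la; omega))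
        (hle_of_code_le_one lb (by have := lehmerCode_le_sub π lb; omega))
        (hlt la (by omega)) (hlt lb hπlb.ge)
      omega
    exact ⟨q', hkq, hq1, fun j hkj hj => not_lt.1 fun hjq => (hzone j).1 hkj hjq hj, hπq⟩

lemma sum_range_filter_two_le (θ : ℝ) (n : ℕ) :
    ∑ v ∈ range (n + 1) with 2 ≤ v, θ ^ v = θ ^ 2 * Ppoly θ (n - 1) := by
  have : {v ∈ range (n + 1) | 2 ≤ v} = Ico 2 (n + 1) := by ext; simp; omega
  rw [this, sum_Ico_eq_sum_range, Ppoly, mul_sum, show n + 1 - 2 = n - 1 by omega]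
  simp only [pow_add]

lemma sum_range_filter_ne_one (θ : ℝ) (n : ℕ) :
    ∑ v ∈ range (n + 1) with v ≠ 1, θ ^ v = 1 + θ ^ 2 * Ppoly θ (n - 1) := by
  have : {v ∈ range (n + 1) | v ≠ 1} = insert 0 {v ∈ range (n + 1) | 2 ≤ v} := by
    ext; simp; omega
  rw [this, sum_insert (by simp), sum_range_filter_two_le, pow_zero]

lemma sum_range_filter_eq_one (θ : ℝ) {n : ℕ} (hn : 1 ≤ n) :
    ∑ v ∈ range (n + 1) with v = 1, θ ^ v = θ := by
  rw [filter_eq' (range (n + 1)) 1, if_pos (by simp; omega), sum_singleton, pow_one]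

lemma Pfact_eq_prod_range (θ : ℝ) (k : ℕ) :
    Pfact θ k = ∏ n ∈ range k, Ppoly θ (n + 1) := by
  rw [Pfact, range_eq_Ico, ← Ico_add_one_right_eq_Icc, prod_Ico_add' (Ppoly θ)]

lemma Pfact_succ_mul_prod_Icc (θ : ℝ) {m n : ℕ} (h : m ≤ n) :
    Pfact θ (m + 1) * ∏ j ∈ Icc m n, Ppoly θ j =
      Pfact θ n * Ppoly θ (m + 1) * Ppoly θ m := by
  have hPfact (a : ℕ) : Pfact θ a = ∏ j ∈ Ioc 0 a, Ppoly θ j := rfl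
  rw [hPfact, hPfact, prod_Ioc_succ_top (Nat.zero_le m), ← Ioc_insert_left h,
    prod_insert left_notMem_Ioc, ← prod_Ioc_consecutive _ (Nat.zero_le m) h]
  ring

lemma prod_Ico_sub_one {M : Type*} [CommMonoid M] (g : ℕ → M) {a b : ℕ} (ha : 1 ≤ a)
    (hb : 2 ≤ b) : ∏ n ∈ Ico a b, g (n - 1) = ∏ j ∈ Icc (a - 1) (b - 2), g j := by
  rw [← Ico_add_one_right_eq_Icc, show b - 2 + 1 = b - 1 by omega, prod_Ico_eq_prod_range,
    prod_Ico_eq_prod_range, show b - 1 - (a - 1) = b - a by omega]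
  exact prod_congr rfl fun i _ => by congr 1; omega

lemma sum_prod_Ico_one_add_mul_prod_Ico {R : Type*} [CommRing R] (x : ℕ → R) (a b : ℕ) :
    ∑ q ∈ Ico a b, (∏ n ∈ Ico a q, (1 + x n)) * ∏ n ∈ Ico (q + 1) b, x n =
      ∏ n ∈ Ico a b, (1 + x n) - ∏ n ∈ Ico a b, x n := by
  simp_rw [add_comm (1 : R)]
  rw [prod_add_ordered, add_sub_cancel_left]
  refine sum_congr rfl fun q hq => ?_
  rw [mem_Ico] at hq
  rw [one_mul, Ico_filter_lt, min_eq_right hq.2.le]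
  congr 2
  ext n
  simp only [mem_filter, mem_Ico]
  omega

lemma T2_eq (θ : ℝ) {k : ℕ} (hk : 1 ≤ k) (hkN : k < N) :
    T2 θ N k = Pfact θ k * ∏ j ∈ Icc (k - 1) (N - 2), (1 + θ ^ 2 * Ppoly θ j) := by
  have hsum : T2 θ N k =
      ∏ n ∈ range N, ∑ v ∈ range (n + 1) with (k ≤ n → v ≠ 1), θ ^ v := by
    rw [T2, ← Fin.prod_univ_eq_prod_range, ← sum_filter_pow_invCount]
    exact sum_congr (filter_congr fun π _ => Iff.rfl) fun _ _ => rfl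
  rw [hsum, ← prod_range_mul_prod_Ico _ hkN.le, Pfact_eq_prod_range,
    ← prod_Ico_sub_one (fun j => 1 + θ ^ 2 * Ppoly θ j) hk (by omega)]
  congr 1
  · refine prod_congr rfl fun n hn => ?_
    rw [filter_true_of_mem fun v _ h => absurd h (by simp at hn; omega)]
    rfl
  · refine prod_congr rfl fun n hn => ?_
    rw [← sum_range_filter_ne_one]
    exact sum_congr (filter_congr fun v _ => by simp [(mem_Ico.1 hn).1]) fun _ _ => rfl

lemma W2_eq_sum_winZone (θ : ℝ) {k : ℕ} (hN : 2 ≤ N) :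
    W2 θ N k = ∑ q ∈ Ico k N, ∑ π with ∀ i : Fin N, winZone k q i (lehmerCode π i),
      θ ^ invCount π := by
  have hunion : ({π | kWinnable2 k π} : Finset (Equiv.Perm (Fin N))) =
      (Ico k N).biUnion fun q => {π | ∀ i : Fin N, winZone k q i (lehmerCode π i)} := by
    ext π
    simp only [mem_filter, mem_univ, true_and, mem_biUnion, mem_Ico, kWinnable2_iff hN, and_assoc]
  have hdisj : (Ico k N : Set ℕ).PairwiseDisjoint
      fun q => ({π | ∀ i : Fin N, winZone k q i (lehmerCode π i)} : Finset _) := by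
    intro q₁ hq₁ q₂ hq₂ hne
    simp only [coe_Ico, Set.mem_Ico] at hq₁ hq₂
    refine disjoint_left.2 fun π h₁ h₂ => ?_
    simp only [mem_filter, mem_univ, true_and] at h₁ h₂
    rcases hne.lt_or_gt with h | h
    · exact (h₂ ⟨q₁, hq₁.2⟩).1 hq₁.1 h ((h₁ ⟨q₁, hq₁.2⟩).2.1 rfl)
    · exact (h₁ ⟨q₂, hq₂.2⟩).1 hq₂.1 h ((h₂ ⟨q₂, hq₂.2⟩).2.1 rfl)
  rw [W2, hunion, sum_biUnion hdisj]

lemma sum_winZone_eq (θ : ℝ) {k q : ℕ} (hk : 1 ≤ k) (hkq : k ≤ q) (hqN : q < N) :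
    ∑ π with ∀ i : Fin N, winZone k q i (lehmerCode π i), θ ^ invCount π =
      θ * Pfact θ k * ((∏ n ∈ Ico k q, (1 + θ ^ 2 * Ppoly θ (n - 1))) *
        ∏ n ∈ Ico (q + 1) N, θ ^ 2 * Ppoly θ (n - 1)) := by
  rw [sum_filter_pow_invCount θ fun i => winZone k q i,
    Fin.prod_univ_eq_prod_range (fun n => ∑ v ∈ range (n + 1) with winZone k q n v, θ ^ v),
    ← prod_range_mul_prod_Ico _ (hkq.trans hqN.le), ← prod_Ico_consecutive _ hkq hqN.le,
    prod_eq_prod_Ico_succ_bot hqN, Pfact_eq_prod_range]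
  have hzone {n : ℕ} {p : ℕ → Prop} [DecidablePred p] (h : ∀ v, winZone k q n v ↔ p v) :
      ∑ v ∈ range (n + 1) with winZone k q n v, θ ^ v =
        ∑ v ∈ range (n + 1) with p v, θ ^ v :=
    sum_congr (filter_congr fun v _ => h v) fun _ _ => rfl
  have hbefore : ∀ n ∈ range k, ∑ v ∈ range (n + 1) with winZone k q n v, θ ^ v =
      Ppoly θ (n + 1) := fun n hn => by
    rw [mem_range] at hn
    rw [hzone (p := fun _ => True) fun v => by unfold winZone; simp only [iff_true]; omega,
      filter_true]
    rfl
  have hwait : ∀ n ∈ Ico k q, ∑ v ∈ range (n + 1) with winZone k q n v, θ ^ v =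
      1 + θ ^ 2 * Ppoly θ (n - 1) := fun n hn => by
    rw [mem_Ico] at hn
    rw [hzone (p := (· ≠ 1)) fun v => by unfold winZone; omega, sum_range_filter_ne_one]
  have haccept : ∑ v ∈ range (q + 1) with winZone k q q v, θ ^ v = θ := by
    rw [hzone (p := (· = 1)) fun v => by unfold winZone; omega,
      sum_range_filter_eq_one θ (hk.trans hkq)]
  have hafter : ∀ n ∈ Ico (q + 1) N, ∑ v ∈ range (n + 1) with winZone k q n v, θ ^ v =
      θ ^ 2 * Ppoly θ (n - 1) := fun n hn => by
    rw [mem_Ico] at hn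
    rw [hzone (p := (2 ≤ ·)) fun v => by unfold winZone; omega, sum_range_filter_two_le]
  rw [prod_congr rfl hbefore, prod_congr rfl hwait, haccept, prod_congr rfl hafter]
  ring

lemma W2_eq (θ : ℝ) {k : ℕ} (hk : 1 ≤ k) (hkN : k < N) :
    W2 θ N k = θ * Pfact θ k * (∏ j ∈ Icc (k - 1) (N - 2), (1 + θ ^ 2 * Ppoly θ j) -
      ∏ j ∈ Icc (k - 1) (N - 2), θ ^ 2 * Ppoly θ j) := by
  rw [W2_eq_sum_winZone θ (by omega),
    sum_congr rfl fun q hq => sum_winZone_eq θ hk (mem_Ico.1 hq).1 (mem_Ico.1 hq).2, ← mul_sum,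
    sum_prod_Ico_one_add_mul_prod_Ico (fun n => θ ^ 2 * Ppoly θ (n - 1)),
    prod_Ico_sub_one (fun j => 1 + θ ^ 2 * Ppoly θ j) hk (by omega),
    prod_Ico_sub_one (fun j => θ ^ 2 * Ppoly θ j) hk (by omega)]

/-- Closed form: for `k ≥ 1` and `N ≥ k+1`,
`W₂(N,k) = θ·T₂(N,k) − θ^{2N−2k+1}·(P_{N−2})!·P_k·P_{k−1}
         = θ·(P_k)!·[∏_{j=k−1}^{N−2}(1+θ²P_j) − θ^{2N−2k}·∏_{j=k−1}^{N−2} P_j]`. -/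
theorem W2_closed_form (θ : ℝ) (N k : ℕ) (hk : 1 ≤ k) (hN : k + 1 ≤ N) :
    W2 θ N k =
      θ * T2 θ N k - θ ^ (2 * N - 2 * k + 1) * Pfact θ (N - 2) * Ppoly θ k * Ppoly θ (k - 1) ∧
    W2 θ N k =
      θ * Pfact θ k *
        ((∏ j ∈ Finset.Icc (k - 1) (N - 2), (1 + θ ^ 2 * Ppoly θ j)) -
          θ ^ (2 * N - 2 * k) * ∏ j ∈ Finset.Icc (k - 1) (N - 2), Ppoly θ j) := by
  have hpow : ∏ j ∈ Icc (k - 1) (N - 2), θ ^ 2 * Ppoly θ j =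
      θ ^ (2 * N - 2 * k) * ∏ j ∈ Icc (k - 1) (N - 2), Ppoly θ j := by
    rw [prod_mul_distrib, prod_const, Nat.card_Icc, ← pow_mul]
    congr 2
    omega
  have hW : W2 θ N k = θ * Pfact θ k *
      (∏ j ∈ Icc (k - 1) (N - 2), (1 + θ ^ 2 * Ppoly θ j) -
        θ ^ (2 * N - 2 * k) * ∏ j ∈ Icc (k - 1) (N - 2), Ppoly θ j) := by
    rw [W2_eq θ hk hN, hpow]
  have hfact := Pfact_succ_mul_prod_Icc θ (m := k - 1) (n := N - 2) (by omega)
  rw [Nat.sub_add_cancel hk] at hfact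
  refine ⟨?_, hW⟩
  rw [hW, T2_eq θ hk hN]
  linear_combination (-θ ^ (2 * N - 2 * k + 1)) * hfact
end

section
/- When θ = 1, for 1 ≤ k ≤ N the probability of selecting the second-largest value N−1 by the strategy 'reject the first k candidates then accept the next left-to-right second maximum', under a uniformly random permutation of S_N, equals k(N−k)/(N(N−1)). -/
open Finset
open scoped Classical

noncomputable def code {N : ℕ} (π : Equiv.Perm (Fin N)) : Fin N → ℕ :=
  fun i => (Finset.univ.filter (fun l : Fin N => l ≤ i ∧ π i < π l)).card


lemma code_lt {N : ℕ} (π : Equiv.Perm (Fin N)) (i : Fin N) : code π i < (i : ℕ) + 1 := by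
  have hsub : (Finset.univ.filter (fun l : Fin N => l ≤ i ∧ π i < π l)) ⊆ Finset.Iio i := by
    intro l hl
    simp only [mem_filter, mem_univ, true_and] at hl
    rcases hl with ⟨hle, hlt⟩
    rcases lt_or_eq_of_le hle with h | h
    · exact Finset.mem_Iio.mpr h
    · subst h; exact absurd hlt (lt_irrefl _)
  have h1 := Finset.card_le_card hsub
  have hIio : (Finset.Iio i).card = (i : ℕ) := by simp
  unfold code
  omega


lemma code_step {N : ℕ} (π σ : Equiv.Perm (Fin N)) (h : code π = code σ) (i : Fin N)
    (hAfter : ∀ j : Fin N, i < j → π j = σ j) : π i = σ i := by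
  set A : Finset (Fin N) := Finset.univ.filter (fun l => l ≤ i) with hA
  set U : Finset (Fin N) := A.image π with hU
  set V : Finset (Fin N) := A.image σ with hV
  have hmemU : ∀ x, x ∈ U ↔ π.symm x ≤ i := by
    intro x
    simp only [hU, mem_image, hA, mem_filter, mem_univ, true_and]
    constructor
    · rintro ⟨l, hl, rfl⟩; simpa using hl
    · intro hx; exact ⟨π.symm x, hx, by simp⟩
  have hmemV : ∀ x, x ∈ V ↔ σ.symm x ≤ i := by
    intro x
    simp only [hV, mem_image, hA, mem_filter, mem_univ, true_and]
    constructor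
    · rintro ⟨l, hl, rfl⟩; simpa using hl
    · intro hx; exact ⟨σ.symm x, hx, by simp⟩
  have hUV : U = V := by
    ext x
    rw [hmemU, hmemV]
    constructor
    · intro hx
      by_contra hc
      have hlt : i < σ.symm x := lt_of_not_ge hc
      have := hAfter (σ.symm x) hlt
      rw [Equiv.apply_symm_apply] at this
      have : π.symm x = σ.symm x := by
        rw [Equiv.symm_apply_eq]; exact this.symm
      rw [this] at hx
      exact hc hx
    · intro hx
      by_contra hc
      have hlt : i < π.symm x := lt_of_not_ge hc
      have := hAfter (π.symm x) hlt
      rw [Equiv.apply_symm_apply] at this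
      have h2 : σ.symm x = π.symm x := by
        rw [Equiv.symm_apply_eq]; exact this
      rw [h2] at hx
      exact hc hx
  -- code π i = card (U.filter (π i < ·))
  have hcode : ∀ τ : Equiv.Perm (Fin N), code τ i = ((A.image τ).filter (fun v => τ i < v)).card := by
    intro τ
    rw [Finset.filter_image]
    rw [Finset.card_image_of_injective _ τ.injective]
    unfold code
    congr 1
    rw [hA, Finset.filter_filter]
  have hπU : π i ∈ U := (hmemU _).mpr (by simp)
  have hσU : σ i ∈ U := by
    rw [hUV, hmemV]; simp
  -- the counting function is injective on U
  have hf : ∀ v w : Fin N, v ∈ U → w ∈ U → v < w →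
      ((U.filter (fun x => w < x)).card < (U.filter (fun x => v < x)).card) := by
    intro v w hv hw hvw
    apply Finset.card_lt_card
    constructor
    · intro x hx
      simp only [mem_filter] at hx ⊢
      exact ⟨hx.1, lt_trans hvw hx.2⟩
    · intro hsub
      have : w ∈ U.filter (fun x => v < x) := by simp [hw, hvw]
      have := hsub this
      simp at this
  have hcards : ((U.filter (fun x => π i < x)).card = (U.filter (fun x => σ i < x)).card) := by
    have h1 := hcode π
    have h2 := hcode σ
    rw [← hU] at h1
    rw [← hV, ← hUV] at h2
    rw [← h1, ← h2, h]
  rcases lt_trichotomy (π i) (σ i) with hlt | heq | hgt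
  · exact absurd hcards (by have := hf _ _ hπU hσU hlt; omega)
  · exact heq
  · exact absurd hcards (by have := hf _ _ hσU hπU hgt; omega)


lemma code_inj {N : ℕ} : Function.Injective (code (N := N)) := by
  intro π σ h
  have key : ∀ n : ℕ, ∀ i : Fin N, N ≤ (i : ℕ) + n → π i = σ i := by
    intro n
    induction n with
    | zero => intro i hi; exact absurd hi (by have := i.isLt; omega)
    | succ n ih =>
      intro i hi
      refine code_step π σ h i ?_
      intro j hij
      refine ih j ?_
      have : (i : ℕ) < (j : ℕ) := hij
      omega
  ext i
  have := key N i (by omega)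
  rw [this]

def Qc {N : ℕ} (k : ℕ) (c : Fin N → ℕ) : Prop :=
  ∃ b : Fin N, k ≤ (b : ℕ) ∧ c b = 1 ∧ (∀ i : Fin N, k ≤ (i : ℕ) → i < b → c i ≠ 1) ∧
    (∀ j : Fin N, b < j → 2 ≤ c j)


lemma winnable_iff {N k : ℕ} (hN : 2 ≤ N) (π : Equiv.Perm (Fin N)) :
    kWinnable2 k π ↔ Qc k (code π) := by
  have hsm : ∀ i, isSecondMax π i ↔ code π i = 1 := fun i => Iff.rfl
  set v1 : Fin N := ⟨N - 1, by omega⟩ with hv1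
  set v2 : Fin N := ⟨N - 2, by omega⟩ with hv2
  have hlt_v1 : ∀ x : Fin N, x ≠ v1 → x < v1 := by
    intro x hx
    have h1 := x.isLt
    have h2 : (x : ℕ) ≠ N - 1 := fun hc => hx (Fin.ext hc)
    exact Fin.lt_def.mpr (by simp only [hv1]; omega)
  have hgt_v2 : ∀ x : Fin N, v2 < x → x = v1 := by
    intro x hx
    have h1 := x.isLt
    have h2 : (N : ℕ) - 2 < (x : ℕ) := hx
    exact Fin.ext (by simp only [hv1]; omega)
  have hlt_v2 : ∀ x : Fin N, x ≠ v1 → x ≠ v2 → x < v2 := by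
    intro x h1 h2
    have := x.isLt
    have e1 : (x : ℕ) ≠ N - 1 := fun hc => h1 (Fin.ext hc)
    have e2 : (x : ℕ) ≠ N - 2 := fun hc => h2 (Fin.ext hc)
    exact Fin.lt_def.mpr (by simp only [hv2]; omega)
  have hv12 : v1 ≠ v2 := by
    intro hc
    have : (N : ℕ) - 1 = N - 2 := congrArg Fin.val hc
    omega
  have hmem : ∀ i l : Fin N,
      l ∈ (Finset.univ.filter (fun l : Fin N => l ≤ i ∧ π i < π l)) ↔ (l ≤ i ∧ π i < π l) := by
    intro i l; simp
  constructor
  · rintro ⟨i, hki, hsmi, hmin, hval⟩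
    have hπi : π i = v2 := Fin.ext (by simpa using hval)
    obtain ⟨a, ha⟩ := Finset.card_eq_one.mp hsmi
    have hamem : a ≤ i ∧ π i < π a := (hmem i a).mp (ha ▸ Finset.mem_singleton_self a)
    have hπa : π a = v1 := hgt_v2 _ (hπi ▸ hamem.2)
    have hai : a ≠ i := by
      intro hc; rw [hc] at hamem; exact absurd hamem.2 (lt_irrefl _)
    refine ⟨i, hki, (hsm i).mp hsmi, ?_, ?_⟩
    · intro i' hki' hi' hc
      have := hmin i' hki' ((hsm i').mpr hc)
      exact absurd hi' (not_lt.mpr this)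
    · intro j hj
      have haj : a ≠ j := by
        intro hc; rw [hc] at hamem
        exact absurd (lt_of_le_of_lt hamem.1 hj) (lt_irrefl _)
      have hij : i ≠ j := fun hc => absurd (hc ▸ hj) (lt_irrefl _)
      have hπj1 : π j ≠ v1 := by
        intro hc; exact haj (π.injective (hπa.trans hc.symm))
      have hπj2 : π j ≠ v2 := by
        intro hc; exact hij (π.injective (hπi.trans hc.symm))
      have h2le : 1 < (Finset.univ.filter (fun l : Fin N => l ≤ j ∧ π j < π l)).card := by
        refine Finset.one_lt_card.mpr ⟨a, ?_, i, ?_, hai⟩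
        · exact (hmem j a).mpr ⟨le_of_lt (lt_of_le_of_lt hamem.1 hj),
            hπa ▸ lt_of_lt_of_le (hlt_v2 _ hπj1 hπj2) (le_of_lt (hv2 ▸ hlt_v1 v2 (Ne.symm hv12)))⟩
        · exact (hmem j i).mpr ⟨le_of_lt hj, hπi ▸ hlt_v2 _ hπj1 hπj2⟩
      exact h2le
  · rintro ⟨b, hkb, hcb, hmid, htail⟩
    set a : Fin N := π.symm v1 with hadef
    set s : Fin N := π.symm v2 with hsdef
    have hπa : π a = v1 := by simp [hadef]
    have hπs : π s = v2 := by simp [hsdef]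
    have hcode_a : code π a = 0 := by
      unfold code
      rw [Finset.card_eq_zero]
      rw [Finset.eq_empty_iff_forall_notMem]
      intro l hl
      have hl' := (hmem a l).mp hl
      have : π l ≤ v1 := by
        rcases eq_or_ne (π l) v1 with h | h
        · exact le_of_eq h
        · exact le_of_lt (hlt_v1 _ h)
      exact absurd (lt_of_lt_of_le (hπa ▸ hl'.2) this) (lt_irrefl _)
    have hcode_s : code π s ≤ 1 := by
      unfold code
      refine le_trans (Finset.card_le_card ?_) (le_of_eq (Finset.card_singleton a))
      intro l hl
      have hl' := (hmem s l).mp hl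
      have : π l = v1 := hgt_v2 _ (hπs ▸ hl'.2)
      have : l = a := π.injective (this.trans hπa.symm)
      simp [this]
    have hab : a < b := by
      rcases lt_trichotomy a b with h | h | h
      · exact h
      · exfalso; rw [h] at hπa
        have : code π b = 0 := by rw [← h]; exact h ▸ hcode_a
        omega
      · have := htail a h; omega
    have hsb : s = b := by
      rcases lt_trichotomy s b with h | h | h
      · exfalso
        -- then code π b ≥ 2, contradiction with = 1
        have hπb1 : π b ≠ v1 := by
          intro hc
          have : b = a := π.injective (hc.trans hπa.symm)
          rw [this] at hab; exact absurd hab (lt_irrefl _)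
        have hπb2 : π b ≠ v2 := by
          intro hc
          have : b = s := π.injective (hc.trans hπs.symm)
          rw [this] at h; exact absurd h (lt_irrefl _)
        have h2le : 1 < (Finset.univ.filter (fun l : Fin N => l ≤ b ∧ π b < π l)).card := by
          refine Finset.one_lt_card.mpr ⟨a, ?_, s, ?_, ?_⟩
          · exact (hmem b a).mpr ⟨le_of_lt hab, hπa ▸ hlt_v1 _ hπb1⟩
          · exact (hmem b s).mpr ⟨le_of_lt h, hπs ▸ hlt_v2 _ hπb1 hπb2⟩
          · intro hc
            rw [hc] at hπa
            exact hv12 (hπa.symm.trans hπs)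
        have : code π b = 1 := hcb
        unfold code at this
        omega
      · exact h
      · have := htail s h; omega
    refine ⟨b, hkb, (hsm b).mpr hcb, ?_, ?_⟩
    · intro j hkj hsmj
      by_contra hc
      have hjb : j < b := lt_of_not_ge hc
      exact hmid j hkj hjb ((hsm j).mp hsmj)
    · have : π b = v2 := by rw [← hsb]; exact hπs
      simp [this, hv2]

lemma fact_prod (m n : ℕ) (h : m ≤ n) :
    m.factorial * ∏ i ∈ Ico (m + 1) (n + 1), i = n.factorial := by
  rw [← Finset.prod_Ico_id_eq_factorial m, ← Finset.prod_Ico_id_eq_factorial n]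
  exact Finset.prod_Ico_consecutive _ (by omega) (by omega)


lemma prod_shift (b Nn : ℕ) (h : b + 1 ≤ Nn) :
    ∏ i ∈ Ico (b + 1) Nn, (i - 1) = ∏ i ∈ Ico b (Nn - 1), i := by
  rw [Finset.prod_Ico_eq_prod_range, Finset.prod_Ico_eq_prod_range]
  have : Nn - (b + 1) = Nn - 1 - b := by omega
  rw [this]
  refine Finset.prod_congr rfl ?_
  intro x hx
  omega


lemma prod_g (N k b : ℕ) (hN : 2 ≤ N) (hk : 1 ≤ k) (hkb : k ≤ b) (hbN : b < N)
    (g : ℕ → ℕ)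
    (hg1 : ∀ i < k, g i = i + 1)
    (hg2 : ∀ i, k ≤ i → i < b → g i = i)
    (hg3 : g b = 1)
    (hg4 : ∀ i, b < i → g i = i - 1) :
    ∏ i ∈ range N, g i = k * (N - 2).factorial := by
  have split1 : ∏ i ∈ range N, g i =
      (∏ i ∈ Ico 0 k, g i) * (∏ i ∈ Ico k b, g i) * (∏ i ∈ Ico b (b+1), g i) *
        (∏ i ∈ Ico (b+1) N, g i) := by
    rw [Finset.prod_Ico_consecutive g (by omega : (0:ℕ) ≤ k) (by omega : k ≤ b)]
    rw [Finset.prod_Ico_consecutive g (by omega : (0:ℕ) ≤ b) (by omega : b ≤ b + 1)]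
    rw [Finset.prod_Ico_consecutive g (by omega : (0:ℕ) ≤ b + 1) (by omega : b + 1 ≤ N)]
    rw [Finset.range_eq_Ico]
  have e1 : ∏ i ∈ Ico 0 k, g i = k.factorial := by
    rw [← Finset.prod_range_add_one_eq_factorial, Finset.range_eq_Ico]
    exact Finset.prod_congr rfl (fun x hx => hg1 x (by simpa using hx))
  have e2 : ∏ i ∈ Ico b (b+1), g i = 1 := by
    rw [Finset.prod_Ico_succ_top (by omega), Finset.Ico_self, Finset.prod_empty, one_mul, hg3]
  set A := ∏ i ∈ Ico k b, g i with hA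
  set B := ∏ i ∈ Ico (b+1) N, g i with hB
  have eA : (k - 1).factorial * A = (b - 1).factorial := by
    have : A = ∏ i ∈ Ico ((k-1)+1) ((b-1)+1), i := by
      rw [hA]
      have h1 : k - 1 + 1 = k := by omega
      have h2 : b - 1 + 1 = b := by omega
      rw [h1, h2]
      exact Finset.prod_congr rfl (fun x hx => by
        rw [Finset.mem_Ico] at hx; exact hg2 x hx.1 hx.2)
    rw [this]
    exact fact_prod _ _ (by omega)
  have eB : (b - 1).factorial * B = (N - 2).factorial := by
    have : B = ∏ i ∈ Ico ((b-1)+1) ((N-2)+1), i := by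
      rw [hB]
      have h1 : b - 1 + 1 = b := by omega
      have h2 : N - 2 + 1 = N - 1 := by omega
      rw [h1, h2]
      rw [← prod_shift b N (by omega)]
      exact Finset.prod_congr rfl (fun x hx => by
        rw [Finset.mem_Ico] at hx; exact hg4 x hx.1)
    rw [this]
    exact fact_prod _ _ (by omega)
  rw [split1, e1, e2]
  have key : (k-1).factorial * (b-1).factorial * (k.factorial * A * 1 * B)
      = (k-1).factorial * (b-1).factorial * (k * (N-2).factorial) := by
    have hkf : k.factorial = k * (k-1).factorial := by
      have : k = (k-1) + 1 := by omega
      rw [this]; simp [Nat.factorial_succ]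
    calc (k-1).factorial * (b-1).factorial * (k.factorial * A * 1 * B)
        = k.factorial * ((k-1).factorial * A) * ((b-1).factorial * B) := by ring
      _ = k.factorial * (b-1).factorial * (N-2).factorial := by rw [eA, eB]
      _ = (k-1).factorial * (b-1).factorial * (k * (N-2).factorial) := by rw [hkf]; ring
  have hpos : 0 < (k-1).factorial * (b-1).factorial := by positivity
  exact Nat.eq_of_mul_eq_mul_left hpos (by rw [mul_assoc, mul_assoc] at key ⊢; exact key)

noncomputable def tset (N k b : ℕ) (i : Fin N) : Finset ℕ :=
  if (i : ℕ) < k then range ((i : ℕ) + 1)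
  else if (i : ℕ) < b then (range ((i : ℕ) + 1)).erase 1
  else if (i : ℕ) = b then {1}
  else Ico 2 ((i : ℕ) + 1)


lemma tset_subset (N k b : ℕ) (hk : 1 ≤ k) (hkb : k ≤ b) (i : Fin N) :
    tset N k b i ⊆ range ((i : ℕ) + 1) := by
  unfold tset
  split_ifs with h1 h2 h3
  · exact subset_rfl
  · exact Finset.erase_subset _ _
  · intro x hx; rw [Finset.mem_singleton] at hx; rw [Finset.mem_range]; omega
  · intro x hx; rw [Finset.mem_Ico] at hx; rw [Finset.mem_range]; omega


lemma tset_card (N k b : ℕ) (hk : 1 ≤ k) (i : Fin N) :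
    (tset N k b i).card =
      (fun n : ℕ => if n < k then n + 1 else if n < b then n
        else if n = b then 1 else n - 1) (i : ℕ) := by
  unfold tset
  simp only []
  split_ifs with h1 h2 h3
  · simp
  · rw [Finset.card_erase_of_mem (by rw [Finset.mem_range]; omega)]
    simp
  · simp
  · rw [Nat.card_Ico]; omega


lemma image_code (N : ℕ) :
    (Finset.univ : Finset (Equiv.Perm (Fin N))).image code
      = Fintype.piFinset (fun i : Fin N => range ((i : ℕ) + 1)) := by
  apply Finset.eq_of_subset_of_card_le
  · intro c hc
    rw [Finset.mem_image] at hc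
    obtain ⟨π, _, rfl⟩ := hc
    rw [Fintype.mem_piFinset]
    intro i
    rw [Finset.mem_range]
    exact code_lt π i
  · rw [Fintype.card_piFinset]
    rw [Finset.card_image_of_injective _ code_inj, Finset.card_univ, Fintype.card_perm,
      Fintype.card_fin]
    simp only [Finset.card_range]
    rw [Fin.prod_univ_eq_prod_range (fun i => i + 1) N,
      Finset.prod_range_add_one_eq_factorial]


lemma filter_Qc_eq (N k : ℕ) (hk : 1 ≤ k) :
    (Fintype.piFinset (fun i : Fin N => range ((i : ℕ) + 1))).filter (Qc k)
      = (Finset.Ico k N).biUnion (fun b => Fintype.piFinset (tset N k b)) := by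
  ext c
  simp only [Finset.mem_filter, Fintype.mem_piFinset, Finset.mem_biUnion, Finset.mem_Ico,
    Finset.mem_range]
  constructor
  · rintro ⟨hT, b, hkb, hcb, hmid, htail⟩
    refine ⟨(b : ℕ), ⟨hkb, b.isLt⟩, ?_⟩
    intro i
    unfold tset
    by_cases h1 : (i : ℕ) < k
    · simp only [h1, if_true, Finset.mem_range]; exact hT i
    · by_cases h2 : (i : ℕ) < (b : ℕ)
      · simp only [h1, h2, if_false, if_true, Finset.mem_erase, Finset.mem_range]
        exact ⟨hmid i (by omega) (Fin.lt_def.mpr h2), hT i⟩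
      · by_cases h3 : (i : ℕ) = (b : ℕ)
        · have hib : i = b := Fin.ext h3
          rw [if_neg h1, if_neg h2, if_pos h3, Finset.mem_singleton, hib]
          exact hcb
        · simp only [h1, h2, h3, if_false, Finset.mem_Ico]
          have hbi : b < i := Fin.lt_def.mpr (by omega)
          exact ⟨htail i hbi, hT i⟩
  · rintro ⟨b, ⟨hkb, hbN⟩, hc⟩
    refine ⟨fun i => Finset.mem_range.mp (tset_subset N k b hk hkb i (hc i)), ⟨b, hbN⟩, hkb,
      ?_, ?_, ?_⟩
    · have h := hc ⟨b, hbN⟩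
      unfold tset at h
      simp only [Fin.val_mk] at h
      rw [if_neg (by omega), if_neg (by omega)] at h
      simpa using h
    · intro i hki hib
      have h := hc i
      unfold tset at h
      have h2 : (i : ℕ) < b := Fin.lt_def.mp hib
      rw [if_neg (by omega), if_pos h2, Finset.mem_erase] at h
      exact h.1
    · intro j hbj
      have h := hc j
      unfold tset at h
      have h2 : b < (j : ℕ) := Fin.lt_def.mp hbj
      rw [if_neg (by omega), if_neg (by omega), if_neg (by omega), Finset.mem_Ico] at h
      exact h.1

lemma piFinset_disj (N k : ℕ) (hk : 1 ≤ k) {b b' : ℕ} (hb : b ∈ Finset.Ico k N)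
    (hb' : b' ∈ Finset.Ico k N) (hne : b ≠ b') :
    Disjoint (Fintype.piFinset (tset N k b)) (Fintype.piFinset (tset N k b')) := by
  rw [Finset.mem_Ico] at hb hb'
  have key : ∀ b b' : ℕ, k ≤ b → b < N → b < b' →
      ∀ c : Fin N → ℕ, c ∈ Fintype.piFinset (tset N k b) →
        c ∈ Fintype.piFinset (tset N k b') → False := by
    intro b b' hkb hbN hlt c hc hc'
    rw [Fintype.mem_piFinset] at hc hc'
    have h1 := hc ⟨b, hbN⟩
    have h2 := hc' ⟨b, hbN⟩
    unfold tset at h1 h2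
    simp only [Fin.val_mk] at h1 h2
    rw [if_neg (by omega), if_neg (by omega)] at h1
    have h1 : c ⟨b, hbN⟩ = 1 := by simpa using h1
    rw [if_neg (by omega), if_pos hlt, Finset.mem_erase] at h2
    exact h2.1 h1
  rw [Finset.disjoint_left]
  intro c hc hc'
  rcases lt_or_gt_of_ne hne with h | h
  · exact key b b' hb.1 hb.2 h c hc hc'
  · exact key b' b hb'.1 hb'.2 h c hc' hc


/-- For a uniformly random permutation of `S_N` (`θ = 1`), the strategy that rejects the
first `k` candidates and accepts the next left-to-right second maximum wins with
probability `k(N−k)/(N(N−1))`, for `1 ≤ k ≤ N`, `N ≥ 2`. -/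
theorem uniform_winning_probability (N k : ℕ) (hN : 2 ≤ N) (hk : 1 ≤ k) (hkN : k ≤ N) :
    ((Finset.univ.filter (fun π : Equiv.Perm (Fin N) => kWinnable2 k π)).card : ℝ) /
        (Nat.factorial N : ℝ)
      = (k * (N - k) : ℝ) / (N * (N - 1) : ℝ) := by
  have hcard : (Finset.univ.filter (fun π : Equiv.Perm (Fin N) => kWinnable2 k π)).card
      = (N - k) * (k * (N - 2).factorial) := by
    have h1 : (Finset.univ.filter (fun π : Equiv.Perm (Fin N) => kWinnable2 k π))
        = Finset.univ.filter (fun π => Qc k (code π)) :=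
      Finset.filter_congr (fun π _ => by rw [winnable_iff hN π])
    have h2 : (Finset.univ.filter (fun π : Equiv.Perm (Fin N) => Qc k (code π))).card
        = (((Finset.univ : Finset (Equiv.Perm (Fin N))).image code).filter (Qc k)).card := by
      rw [Finset.filter_image, Finset.card_image_of_injective _ code_inj]
    rw [h1, h2, image_code, filter_Qc_eq N k hk]
    rw [Finset.card_biUnion (fun b hb b' hb' hne => piFinset_disj N k hk hb hb' hne)]
    have hper : ∀ b ∈ Finset.Ico k N,
        (Fintype.piFinset (tset N k b)).card = k * (N - 2).factorial := by
      intro b hb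
      rw [Finset.mem_Ico] at hb
      rw [Fintype.card_piFinset]
      set g : ℕ → ℕ := fun n => if n < k then n + 1 else if n < b then n
        else if n = b then 1 else n - 1 with hg
      have : ∏ i : Fin N, (tset N k b i).card = ∏ i : Fin N, g (i : ℕ) :=
        Finset.prod_congr rfl (fun i _ => tset_card N k b hk i)
      rw [this, Fin.prod_univ_eq_prod_range g N]
      refine prod_g N k b hN hk hb.1 hb.2 g ?_ ?_ ?_ ?_
      · intro i hi; simp only [hg, if_pos hi]
      · intro i h1 h2; simp only [hg]; rw [if_neg (by omega), if_pos h2]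
      · simp only [hg]; rw [if_neg (by omega), if_neg (by omega)]; simp
      · intro i hi; simp only [hg]
        rw [if_neg (by omega), if_neg (by omega), if_neg (by omega)]
    rw [Finset.sum_congr rfl hper, Finset.sum_const, Nat.card_Ico, smul_eq_mul]
  rw [hcard]
  obtain ⟨M, rfl⟩ : ∃ M, N = M + 2 := ⟨N - 2, by omega⟩
  have hfact : ((M + 2).factorial : ℝ) = ((M : ℝ) + 2) * ((M : ℝ) + 1) * (M.factorial : ℝ) := by
    rw [show M + 2 = (M + 1) + 1 from rfl, Nat.factorial_succ, Nat.factorial_succ]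
    push_cast; ring
  have hsub : ((M + 2 - k : ℕ) : ℝ) = (M : ℝ) + 2 - k := by
    rw [Nat.cast_sub hkN]; push_cast; ring
  rw [show (M + 2) - 2 = M from by omega]
  rw [div_eq_div_iff (by positivity)
    (by have h0 : (0:ℝ) ≤ M := Nat.cast_nonneg M; push_cast; nlinarith)]
  rw [Nat.cast_mul, Nat.cast_mul, hsub, hfact]
  push_cast
  ring
end

section
/- For every θ with 1/2 < θ < 1, the function h₁(j) = (j+1)θ^{j+2} − jθ^{j+1} − (j−1)θ^{j} + jθ^{j−1} − 1 has exactly one positive real root j₁(θ), and h₁(j) > 0 for all 0 < j < j₁(θ). -/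
/-!
Dividing out `θ ^ (j - 1)`, `h₁(j) = θ^j (a j + b) - 1` with `a = (1 - θ)²(1 + θ)/θ > 0` and
`b = θ² + 1 > 1`. For `j ≥ 0` the sign of `h₁(j)` is therefore that of
`g(j) = j log θ + log (a j + b)`, which is strictly concave, positive at `0` and tends to `-∞`;
such a function has exactly one positive root and is positive before it.
-/

open Real

/-- `h₁(j) = (j+1)θ^{j+2} − jθ^{j+1} − (j−1)θ^{j} + jθ^{j−1} − 1`, with real exponents. -/
noncomputable def h1 (θ j : ℝ) : ℝ :=
  (j + 1) * θ ^ (j + 2) - j * θ ^ (j + 1) - (j - 1) * θ ^ j + j * θ ^ (j - 1) - 1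

open Set Filter Topology

theorem StrictConcaveOn.exists_root_of_pos_of_tendsto_atBot {f : ℝ → ℝ}
    (hf : StrictConcaveOn ℝ (Ici 0) f) (hcont : ContinuousOn f (Ici 0)) (h0 : 0 < f 0)
    (hbot : Tendsto f atTop atBot) :
    ∃ q, 0 < q ∧ f q = 0 ∧ (∀ j, 0 < j → f j = 0 → j = q) ∧
      ∀ j, 0 < j → j < q → 0 < f j := by
  have pos_of_lt_root : ∀ {t q}, 0 < t → t < q → f q = 0 → 0 < f t := fun {t q} ht htq hq => by
    have hq0 : 0 < q := ht.trans htq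
    have := hf.lt_on_openSegment (mem_Ici.2 le_rfl) hq0.le hq0.ne
      (by rw [openSegment_eq_Ioo hq0]; exact ⟨ht, htq⟩)
    rwa [hq, min_eq_right h0.le] at this
  obtain ⟨N, hN0, hN⟩ :=
    ((eventually_ge_atTop 0).and (hbot.eventually (eventually_lt_atBot 0))).exists
  obtain ⟨q, ⟨hq0, -⟩, hq⟩ :=
    intermediate_value_Icc' hN0 (hcont.mono Icc_subset_Ici_self) ⟨hN.le, h0.le⟩
  have hqpos : 0 < q := hq0.lt_of_ne (by rintro rfl; exact h0.ne' hq)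
  refine ⟨q, hqpos, hq, fun j hj hj0 => ?_, fun j hj hjq => pos_of_lt_root hj hjq hq⟩
  by_contra hne
  rcases lt_or_gt_of_ne hne with h | h
  · exact (pos_of_lt_root hj h hq).ne' hj0
  · exact (pos_of_lt_root hqpos h hj0).ne' hq

theorem strictConcaveOn_mul_add_log_mul_add (c : ℝ) {a b : ℝ} (ha : 0 < a) (hb : 0 < b) :
    StrictConcaveOn ℝ (Ici 0) fun j => c * j + log (a * j + b) := by
  have hlog : StrictConcaveOn ℝ (Ici 0) fun j => log (a * j + b) := by
    refine ⟨convex_Ici 0, fun x hx y hy hxy μ ν hμ hν hμν => ?_⟩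
    have hpos : ∀ z ∈ Ici (0 : ℝ), a * z + b ∈ Ioi 0 := fun z hz => by
      have := mul_nonneg ha.le hz; simp only [mem_Ioi]; linarith
    have := strictConcaveOn_log_Ioi.2 (hpos x hx) (hpos y hy)
      (fun h => hxy (mul_left_cancel₀ ha.ne' (add_right_cancel h))) hμ hν hμν
    convert this using 2
    simp only [smul_eq_mul]
    linear_combination b * hμν.symm
  refine (hlog.add_concaveOn ((LinearMap.mul ℝ ℝ c).concaveOn (convex_Ici 0))).congr
    fun j _ => ?_
  simp only [Pi.add_apply, LinearMap.mul_apply']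
  ring

theorem tendsto_rpow_mul_mul_add_atTop_nhds_zero {θ : ℝ} (hθ0 : 0 < θ) (hθ1 : θ < 1) (a b : ℝ) :
    Tendsto (fun j => θ ^ j * (a * j + b)) atTop (𝓝 0) := by
  have hc : 0 < -log θ := neg_pos.2 (log_neg hθ0 hθ1)
  have h1 := (tendsto_rpow_mul_exp_neg_mul_atTop_nhds_zero 1 _ hc).const_mul a
  have h0 := (tendsto_rpow_mul_exp_neg_mul_atTop_nhds_zero 0 _ hc).const_mul b
  rw [mul_zero] at h1 h0
  simpa only [zero_add] using (h1.add h0).congr' (by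
    filter_upwards [eventually_ge_atTop 0] with j hj
    rw [rpow_one, rpow_zero, neg_neg, rpow_def_of_pos hθ0]
    ring)

theorem exists_root_rpow_mul_mul_add_sub_one {θ a b : ℝ} (hθ0 : 0 < θ) (hθ1 : θ < 1)
    (ha : 0 < a) (hb : 1 < b) :
    ∃ q, 0 < q ∧ θ ^ q * (a * q + b) - 1 = 0 ∧
      (∀ j, 0 < j → θ ^ j * (a * j + b) - 1 = 0 → j = q) ∧
      ∀ j, 0 < j → j < q → 0 < θ ^ j * (a * j + b) - 1 := by
  set g : ℝ → ℝ := fun j => log θ * j + log (a * j + b)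
  have hlin : ∀ j : ℝ, 0 ≤ j → 0 < a * j + b := fun j hj => by nlinarith
  have hexp : ∀ j : ℝ, 0 ≤ j → θ ^ j * (a * j + b) = exp (g j) := fun j hj => by
    rw [exp_add, exp_log (hlin j hj), rpow_def_of_pos hθ0]
  have hcont : ContinuousOn g (Ici 0) :=
    (continuousOn_const.mul continuousOn_id).add <|
      (continuousOn_const.mul continuousOn_id |>.add continuousOn_const).log
        fun j hj => (hlin j hj).ne'
  have hbot : Tendsto g atTop atBot := by
    have hpos : Tendsto (fun j => θ ^ j * (a * j + b)) atTop (𝓝[>] 0) :=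
      tendsto_nhdsWithin_iff.2 ⟨tendsto_rpow_mul_mul_add_atTop_nhds_zero hθ0 hθ1 a b, by
        filter_upwards [eventually_ge_atTop 0] with j hj
        exact mul_pos (rpow_pos_of_pos hθ0 j) (hlin j hj)⟩
    refine (tendsto_log_nhdsGT_zero.comp hpos).congr' ?_
    filter_upwards [eventually_ge_atTop 0] with j hj
    rw [Function.comp_apply, hexp j hj, log_exp]
  have hconc := strictConcaveOn_mul_add_log_mul_add (log θ) ha (zero_lt_one.trans hb)
  obtain ⟨q, hq, hgq, huniq, hpos⟩ :=
    hconc.exists_root_of_pos_of_tendsto_atBot hcont (by simpa [g] using log_pos hb) hbot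
  have sub_one_eq_zero {j : ℝ} (hj : 0 ≤ j) : θ ^ j * (a * j + b) - 1 = 0 ↔ g j = 0 := by
    rw [hexp j hj, sub_eq_zero, exp_eq_one_iff]
  have sub_one_pos {j : ℝ} (hj : 0 ≤ j) : 0 < θ ^ j * (a * j + b) - 1 ↔ 0 < g j := by
    rw [hexp j hj, sub_pos, one_lt_exp_iff]
  exact ⟨q, hq, (sub_one_eq_zero hq.le).2 hgq,
    fun j hj h => huniq j hj ((sub_one_eq_zero hj.le).1 h),
    fun j hj hjq => (sub_one_pos hj.le).2 (hpos j hj hjq)⟩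

theorem h1_eq_rpow_mul_sub_one {θ : ℝ} (hθ : 0 < θ) (j : ℝ) :
    h1 θ j = θ ^ j * ((1 - θ) ^ 2 * (1 + θ) / θ * j + (θ ^ 2 + 1)) - 1 := by
  rw [h1, rpow_add hθ, rpow_add hθ, rpow_sub hθ, rpow_two, rpow_one]
  field_simp
  ring

/-- For `1/2 < θ < 1`, `h₁` has exactly one positive real root `j₁(θ)`, and
`h₁(j) > 0` for all `0 < j < j₁(θ)`. -/
theorem h1_unique_root (θ : ℝ) (hθ : 1 / 2 < θ) (hθ1 : θ < 1) :
    ∃ j₁ : ℝ, 0 < j₁ ∧ h1 θ j₁ = 0 ∧ (∀ j : ℝ, 0 < j → h1 θ j = 0 → j = j₁) ∧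
      ∀ j : ℝ, 0 < j → j < j₁ → 0 < h1 θ j := by
  have hθ0 : 0 < θ := by linarith
  simp only [h1_eq_rpow_mul_sub_one hθ0]
  exact exists_root_rpow_mul_mul_add_sub_one hθ0 hθ1 (by positivity)
    (lt_add_of_pos_left 1 (pow_pos hθ0 2))
end

section
/- For all θ with 1/2 < θ < 1, one has −ln(1+θ)/ln(θ) > θ²/(1−θ²). -/
/-!
Clearing denominators, the inequality reads `θ² · (-ln θ) < (1 - θ²) · ln (1 + θ)`, and both sides
are separated by `θ (1 - θ)`: on the right by `ln (1 + θ) > θ / (1 + θ)`, on the left by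
`-ln θ ≤ 1/θ - 1`. Both are instances of `ln y < y - 1` (at `y = 1/(1 + θ)` and `y = 1/θ`).
-/

open Real

lemma div_one_add_lt_log_one_add {x : ℝ} (hx : 0 < x) : x / (1 + x) < log (1 + x) := by
  have h := log_lt_sub_one_of_pos (inv_pos.2 (by linarith : 0 < 1 + x))
    (inv_ne_one.2 (by linarith))
  rw [log_inv] at h
  have : (1 + x)⁻¹ - 1 = -(x / (1 + x)) := by field_simp; ring
  linarith

lemma mul_one_sub_lt_log_one_add_mul {θ : ℝ} (h0 : 0 < θ) (h1 : θ < 1) :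
    θ * (1 - θ) < log (1 + θ) * (1 - θ ^ 2) := calc
  θ * (1 - θ) = θ / (1 + θ) * (1 - θ ^ 2) := by field_simp; ring
  _ < log (1 + θ) * (1 - θ ^ 2) :=
    mul_lt_mul_of_pos_right (div_one_add_lt_log_one_add h0) (by nlinarith)

lemma sq_mul_neg_log_le {θ : ℝ} (h0 : 0 < θ) : θ ^ 2 * -log θ ≤ θ * (1 - θ) := calc
  θ ^ 2 * -log θ ≤ θ ^ 2 * (θ⁻¹ - 1) := by
    gcongr
    linarith [one_sub_inv_le_log_of_pos h0]
  _ = θ * (1 - θ) := by field_simp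

lemma sq_div_one_sub_sq_lt_log_one_add_div_neg_log {θ : ℝ} (h0 : 0 < θ) (h1 : θ < 1) :
    θ ^ 2 / (1 - θ ^ 2) < log (1 + θ) / -log θ := by
  rw [div_lt_div_iff₀ (by nlinarith) (neg_pos.2 (log_neg h0 h1))]
  linarith [sq_mul_neg_log_le h0, mul_one_sub_lt_log_one_add_mul h0 h1]

/-- For all `1/2 < θ < 1`: `−ln(1+θ)/ln(θ) > θ²/(1−θ²)`. -/
theorem log_ratio_inequality (θ : ℝ) (hθ : 1 / 2 < θ) (hθ1 : θ < 1) :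
    -(Real.log (1 + θ)) / Real.log θ > θ ^ 2 / (1 - θ ^ 2) := by
  rw [neg_div, ← div_neg]
  exact sq_div_one_sub_sq_lt_log_one_add_div_neg_log (by linarith) hθ1
end

section
/- Let f(x,θ) = θ^{x−2}·((x−1)(1−θ) − θ(1−θ^{x−1})) + θ^{x}(1−θ). Then for every real θ with 0 < θ < 1/2 and every integer x ≥ 3, f(x+1,θ) − f(x,θ) < 0. -/
/-- `f(x,θ) = θ^{x−2}·((x−1)(1−θ) − θ(1−θ^{x−1})) + θ^{x}(1−θ)` for integer `x`. -/
noncomputable def fwin (x : ℕ) (θ : ℝ) : ℝ :=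
  θ ^ (x - 2) * (((x : ℝ) - 1) * (1 - θ) - θ * (1 - θ ^ (x - 1))) + θ ^ x * (1 - θ)

/-- For `0 < θ < 1/2` and integer `x ≥ 3`, `f(x+1,θ) − f(x,θ) < 0`. -/
theorem fwin_decreasing (θ : ℝ) (hθ : 0 < θ) (hθ' : θ < 1 / 2) (x : ℕ) (hx : 3 ≤ x) :
    fwin (x + 1) θ - fwin x θ < 0 := by
  obtain ⟨n, rfl⟩ := Nat.exists_eq_add_of_le hx
  simp only [fwin]
  have e1 : 3 + n - 2 = n + 1 := by omega
  have e2 : 3 + n - 1 = n + 2 := by omega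
  have e3 : 3 + n + 1 - 2 = n + 2 := by omega
  have e4 : 3 + n + 1 - 1 = n + 3 := by omega
  rw [e1, e2, e3, e4]
  push_cast
  have key : θ ^ (n + 2) * ((3 + (n : ℝ) + 1 - 1) * (1 - θ) - θ * (1 - θ ^ (n + 3))) +
        θ ^ (3 + n + 1) * (1 - θ) -
        (θ ^ (n + 1) * ((3 + (n : ℝ) - 1) * (1 - θ) - θ * (1 - θ ^ (n + 2))) +
          θ ^ (3 + n) * (1 - θ)) =
      θ ^ (n + 1) * ((1 - θ) * (-(((n : ℝ) + 2) * (1 - θ)) + 2 * θ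
        - θ ^ (n + 3) * (1 + θ) - θ ^ 2 * (1 - θ))) := by
    ring
  rw [key]
  apply mul_neg_of_pos_of_neg (by positivity)
  apply mul_neg_of_pos_of_neg (by linarith)
  have hn : (0 : ℝ) ≤ (n : ℝ) := Nat.cast_nonneg n
  have h1 : (0 : ℝ) ≤ θ ^ (n + 3) := by positivity
  have h2 : (0 : ℝ) ≤ θ ^ 2 := by positivity
  nlinarith [mul_nonneg hn (by linarith : (0:ℝ) ≤ 1 - θ),
    mul_nonneg h1 (by linarith : (0:ℝ) ≤ 1 + θ),
    mul_nonneg h2 (by linarith : (0:ℝ) ≤ 1 - θ)]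
end

section
/- Let f(x,θ) = θ^{x−2}·((x−1)(1−θ) − θ(1−θ^{x−1})) + θ^{x}(1−θ). For all θ with 0 < θ < 1/2, f(2,θ) − f(3,θ) = (1−2θ)(1−θ)² > 0; consequently the maximum of f(x,θ) over integers x ≥ 2 is attained at x = 2 with value (1−θ)(1−θ+θ²). -/
lemma fwin_step (θ : ℝ) (hθ : 0 < θ) (hθ' : θ < 1 / 2) (n : ℕ) :
    fwin (n + 3) θ ≤ fwin (n + 2) θ := by
  have key : fwin (n + 2) θ - fwin (n + 3) θ =
      θ ^ n * (1 - θ) * ((n : ℝ) + 1 - ((n : ℝ) + 3) * θ)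
      + θ ^ (2 * n + 2) * (1 - θ ^ 2) + θ ^ (n + 2) * (1 - θ) ^ 2 := by
    simp only [fwin, Nat.add_sub_cancel, Nat.cast_add, Nat.cast_ofNat]
    have h1 : (n + 3) - 2 = n + 1 := rfl
    have h2 : (n + 3) - 1 = n + 2 := rfl
    rw [h1, h2]
    push_cast
    ring
  have hθ1 : (0:ℝ) < 1 - θ := by linarith
  have hθ2 : (0:ℝ) ≤ 1 - θ ^ 2 := by nlinarith
  match n with
  | 0 =>
    have heq : fwin 2 θ - fwin 3 θ = (1 - 2 * θ) * (1 - θ) ^ 2 := by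
      rw [(by norm_num : (2:ℕ) = 0 + 2), (by norm_num : (3:ℕ) = 0 + 3), key]; push_cast; ring
    nlinarith [sq_nonneg (1 - θ)]
  | Nat.succ m =>
    simp only [Nat.succ_eq_add_one] at key ⊢
    have hn1 : (0:ℝ) ≤ ((m:ℝ) + 1) + 1 - (((m:ℝ) + 1) + 3) * θ := by
      nlinarith [Nat.cast_nonneg (α := ℝ) m]
    have h1 := mul_nonneg (mul_nonneg (pow_pos hθ (m+1)).le hθ1.le) hn1
    have h2 := mul_nonneg (pow_pos hθ (2*(m+1)+2)).le hθ2
    have h3 := mul_nonneg (pow_pos hθ ((m+1)+2)).le (sq_nonneg (1 - θ))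
    push_cast at key
    linarith [key, h1, h2, h3]

/-- For `0 < θ < 1/2`: `f(2,θ) − f(3,θ) = (1−2θ)(1−θ)² > 0`; consequently the maximum of
`f(x,θ)` over integers `x ≥ 2` is attained at `x = 2`, with value `(1−θ)(1−θ+θ²)`. -/
theorem fwin_max_at_two (θ : ℝ) (hθ : 0 < θ) (hθ' : θ < 1 / 2) :
    fwin 2 θ - fwin 3 θ = (1 - 2 * θ) * (1 - θ) ^ 2 ∧
    0 < (1 - 2 * θ) * (1 - θ) ^ 2 ∧
    (∀ x : ℕ, 2 ≤ x → fwin x θ ≤ fwin 2 θ) ∧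
    fwin 2 θ = (1 - θ) * (1 - θ + θ ^ 2) := by
  refine ⟨?_, ?_, ?_, ?_⟩
  · simp only [fwin]; norm_num [pow_succ]; ring
  · exact mul_pos (by linarith) (pow_pos (by linarith) 2)
  · intro x hx
    obtain ⟨n, rfl⟩ := Nat.exists_eq_add_of_le hx
    rw [add_comm]
    induction n with
    | zero => exact le_refl _
    | succ m ih =>
      calc fwin (m + 1 + 2) θ = fwin (m + 3) θ := by ring_nf
        _ ≤ fwin (m + 2) θ := fwin_step θ hθ hθ' m
        _ ≤ fwin 2 θ := ih (by omega)
  · simp only [fwin]; norm_num [pow_succ]; ring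
end
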